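/- arXiv:2403.07878 — 2 statements merged into one kernel-verified Lean document; each statement's English description precedes it below -/
import Mathlib

section
/- For any integer t and non-negative integer n: sum_{k=0}^n binom(n,k) * (-1)^k * 2^(n-k) * F_{2n+k+3+t} / (k+1) = (2^(n+1) * F_{2n+2+t} - F_t) / (n+1), and the same identity holds with F replaced by L. -/
/-!
With `E` the shift `a ↦ a (· + 1)`, every sequence satisfying `a (m + 2) = a (m + 1) + a m` obeys
`(2 - E) a = E⁻² a`, so the binomial theorem gives `(2 - E)^N a = E^(-2N) a`. Absorbing `1/(k+1)` via
`(n+1) C(n,k) = (k+1) C(n+1,k+1)` turns `n + 1` times the left-hand side into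
`2^(n+1) a (2n+2+t) - ((2 - E)^(n+1) a) (2n+2+t) = 2^(n+1) a (2n+2+t) - a t`.
-/

open Finset

/-- Lucas numbers on naturals. -/
def lucasNat : ℕ → ℤ
  | 0 => 2
  | 1 => 1
  | n + 2 => lucasNat (n + 1) + lucasNat n

/-- Fibonacci numbers extended to integer indices: `F_{-m} = (-1)^(m-1) F_m`. -/
def fibZ (n : ℤ) : ℤ :=
  if 0 ≤ n then (Nat.fib n.toNat : ℤ) else (-1) ^ ((-n).toNat + 1) * (Nat.fib (-n).toNat : ℤ)

/-- Lucas numbers extended to integer indices: `L_{-m} = (-1)^m L_m`. -/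
def lucasZ (n : ℤ) : ℤ :=
  if 0 ≤ n then lucasNat n.toNat else (-1) ^ (-n).toNat * lucasNat (-n).toNat

def IsFibonacciLike {R : Type*} [Add R] (a : ℤ → R) : Prop :=
  ∀ m, a (m + 2) = a (m + 1) + a m

theorem fibZ_natCast (k : ℕ) : fibZ k = Nat.fib k := by
  simp [fibZ]

theorem fibZ_neg_natCast (k : ℕ) : fibZ (-k) = (-1) ^ (k + 1) * Nat.fib k := by
  simp [fibZ]

theorem isFibonacciLike_fibZ : IsFibonacciLike fibZ := fun m => by
  obtain ⟨k, rfl | rfl⟩ := Int.eq_nat_or_neg m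
  · rw [show (k : ℤ) + 2 = (k + 2 : ℕ) by push_cast; ring,
      show (k : ℤ) + 1 = (k + 1 : ℕ) by push_cast; ring,
      fibZ_natCast, fibZ_natCast, fibZ_natCast, Nat.fib_add_two]
    push_cast
    ring
  · match k with
    | 0 => decide
    | 1 => decide
    | k + 2 =>
      rw [show -((k + 2 : ℕ) : ℤ) + 2 = -k by push_cast; ring,
        show -((k + 2 : ℕ) : ℤ) + 1 = -(k + 1 : ℕ) by push_cast; ring,
        fibZ_neg_natCast, fibZ_neg_natCast, fibZ_neg_natCast, Nat.fib_add_two]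
      push_cast
      ring

theorem lucasZ_natCast (k : ℕ) : lucasZ k = lucasNat k := by
  simp [lucasZ]

theorem lucasZ_neg_natCast (k : ℕ) : lucasZ (-k) = (-1) ^ k * lucasNat k := by
  rcases Nat.eq_zero_or_pos k with rfl | hk
  · simp [lucasZ]
  · simp [lucasZ, hk.ne']

theorem isFibonacciLike_lucasZ : IsFibonacciLike lucasZ := fun m => by
  obtain ⟨k, rfl | rfl⟩ := Int.eq_nat_or_neg m
  · rw [show (k : ℤ) + 2 = (k + 2 : ℕ) by push_cast; ring,
      show (k : ℤ) + 1 = (k + 1 : ℕ) by push_cast; ring,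
      lucasZ_natCast, lucasZ_natCast, lucasZ_natCast]
    rfl
  · match k with
    | 0 => decide
    | 1 => decide
    | k + 2 =>
      rw [show -((k + 2 : ℕ) : ℤ) + 2 = -k by push_cast; ring,
        show -((k + 2 : ℕ) : ℤ) + 1 = -(k + 1 : ℕ) by push_cast; ring,
        lucasZ_neg_natCast, lucasZ_neg_natCast, lucasZ_neg_natCast,
        show lucasNat (k + 2) = lucasNat (k + 1) + lucasNat k from rfl]
      ring

namespace IsFibonacciLike

variable {R : Type*} {a : ℤ → R}

theorem intCast [AddGroupWithOne R] {b : ℤ → ℤ} (hb : IsFibonacciLike b) :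
    IsFibonacciLike (fun m => (b m : R)) :=
  fun m => by simp only [hb m, Int.cast_add]

theorem two_mul_sub_shift [CommRing R] (ha : IsFibonacciLike a) (m : ℤ) :
    2 * a m - a (m + 1) = a (m - 2) := by
  have h₁ := ha (m - 2)
  have h₂ := ha (m - 1)
  rw [sub_add_cancel, show m - 2 + 1 = m - 1 by ring] at h₁
  rw [show m - 1 + 2 = m + 1 by ring, sub_add_cancel] at h₂
  linear_combination h₁ - h₂

theorem sum_choose_two_pow_sub_shift [CommRing R] (ha : IsFibonacciLike a) (N : ℕ) (m : ℤ) :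
    ∑ j ∈ range (N + 1), (N.choose j : R) * (-1) ^ j * 2 ^ (N - j) * a (m + j) = a (m - 2 * N) := by
  induction N generalizing m with
  | zero => simp
  | succ N ih =>
    have split := sum_choose_succ_mul (fun i j => (-1) ^ i * 2 ^ j * a (m + i) : ℕ → ℕ → R) N
    simp only [← mul_assoc] at split
    rw [split, ← sum_add_distrib]
    calc _ = ∑ j ∈ range (N + 1), (N.choose j : R) * (-1) ^ j * 2 ^ (N - j) * a (m - 2 + j) := by
          refine sum_congr rfl fun j hj => ?_
          rw [Nat.sub_add_comm (mem_range_succ_iff.mp hj), show m - 2 + j = m + j - 2 by ring,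
            ← ha.two_mul_sub_shift, Nat.cast_succ, ← add_assoc]
          ring
      _ = a (m - 2 * (N + 1 : ℕ)) := by rw [ih]; congr 1; push_cast; ring

theorem sum_choose_mul_div_succ [Field R] [CharZero R] (ha : IsFibonacciLike a) (t : ℤ) (n : ℕ) :
    ∑ k ∈ range (n + 1), (n.choose k : R) * (-1) ^ k * 2 ^ (n - k) * a (2 * n + k + 3 + t) / (k + 1) =
      (2 ^ (n + 1) * a (2 * n + 2 + t) - a t) / (n + 1) := by
  have key := ha.sum_choose_two_pow_sub_shift (n + 1) (2 * n + 2 + t)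
  rw [sum_range_succ', show 2 * n + 2 + t - 2 * ((n + 1 : ℕ) : ℤ) = t by push_cast; ring] at key
  rw [eq_div_iff (Nat.cast_add_one_ne_zero n), sum_mul]
  calc _ = -∑ k ∈ range (n + 1), ((n + 1).choose (k + 1) : R) * (-1) ^ (k + 1) *
        2 ^ (n + 1 - (k + 1)) * a (2 * n + 2 + t + (k + 1 : ℕ)) := by
        rw [← sum_neg_distrib]
        refine sum_congr rfl fun k _ => ?_
        have hc : ((n + 1) * n.choose k : R) = (n + 1).choose (k + 1) * (k + 1) := by
          exact_mod_cast Nat.add_one_mul_choose_eq n k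
        rw [Nat.add_sub_add_right, show 2 * n + 2 + t + (k + 1 : ℕ) = 2 * n + k + 3 + t by
          push_cast; ring]
        rw [div_mul_eq_mul_div, div_eq_iff (Nat.cast_add_one_ne_zero k)]
        linear_combination (-1) ^ k * 2 ^ (n - k) * a (2 * n + k + 3 + t) * hc
    _ = _ := by rw [← key]; simp

end IsFibonacciLike

theorem stmt_11 (t : ℤ) (n : ℕ) :
    (∑ k ∈ range (n + 1),
      (n.choose k : ℚ) * (-1) ^ k * (2 : ℚ) ^ (n - k) * (fibZ (2 * (n : ℤ) + k + 3 + t) : ℚ) / (k + 1) =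
      (2 ^ (n + 1) * (fibZ (2 * n + 2 + t) : ℚ) - fibZ t) / (n + 1)) ∧
    (∑ k ∈ range (n + 1),
      (n.choose k : ℚ) * (-1) ^ k * (2 : ℚ) ^ (n - k) * (lucasZ (2 * (n : ℤ) + k + 3 + t) : ℚ) / (k + 1) =
      (2 ^ (n + 1) * (lucasZ (2 * n + 2 + t) : ℚ) - lucasZ t) / (n + 1)) :=
  ⟨(isFibonacciLike_fibZ.intCast (R := ℚ)).sum_choose_mul_div_succ t n,
    (isFibonacciLike_lucasZ.intCast (R := ℚ)).sum_choose_mul_div_succ t n⟩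
end

section
/- For any integers r, s, t and non-negative integer n: sum_{k=0}^n binom(n,k) * (-1)^(r(n-k)) * F_r^(k+2) * F_s^(n-k) * F_{s(k+2)-r(n-k)+t} / (k+2) = ((-1)^(t+1) * F_s^(n+2) * F_{r(n+2)-t} - F_t * F_{r+s}^(n+2)) / ((n+1)(n+2)) + F_r * F_{s+t} * F_{r+s}^(n+1) / (n+1). -/
/-!
By Binet's formula, and since `(-1)^m φ^(-m) = ψ^m`, the summand is
`(φ^t T(a, b) - ψ^t T(a', b')) / √5`, where `T(a, b) = C(n,k) a^(k+2) b^(n-k) / (k+2)`,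
`a = F_r φ^s`, `b = F_s ψ^r`, `a' = F_r ψ^s`, `b' = F_s φ^r`. Both pairs satisfy
`a + b = F_(r+s)`, and `∑ₖ T(a, b) = ∫₀ᵃ x (x + b)ⁿ dx` has a closed form in `a + b` and `b`.
Recombining with Binet's formula and Vajda's identity
`F_r F_(s+t) = F_t F_(r+s) + (-1)^t F_(r-t) F_s` gives the right-hand side.
-/

open Finset

open Real goldenRatio

theorem fibZ_eq_intFib (n : ℤ) : fibZ n = Int.fib n := by
  obtain ⟨m, rfl | rfl⟩ := n.eq_nat_or_neg
  · simp [fibZ]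
  · simp [fibZ, Int.fib_neg_natCast]

section BinomialSums

theorem sum_range_choose_succ_mul_pow {R : Type*} [CommRing R] (a b : R) (n : ℕ) :
    ∑ k ∈ range (n + 1), ((n + 1).choose (k + 1) : R) * a ^ (k + 1) * b ^ (n - k) =
      (a + b) ^ (n + 1) - b ^ (n + 1) := by
  rw [add_pow, sum_range_succ' _ (n + 1)]
  simp only [Nat.choose_zero_right, pow_zero, Nat.sub_zero, Nat.cast_one, one_mul, mul_one,
    add_sub_cancel_right]
  exact sum_congr rfl fun k _ ↦ by rw [Nat.add_sub_add_right]; ring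

theorem sum_range_choose_add_two_mul_pow {R : Type*} [CommRing R] (a b : R) (n : ℕ) :
    ∑ k ∈ range (n + 1), ((n + 2).choose (k + 2) : R) * a ^ (k + 2) * b ^ (n - k) =
      (a + b) ^ (n + 2) - b ^ (n + 2) - (n + 2) * a * b ^ (n + 1) := by
  have h := sum_range_choose_succ_mul_pow a b (n + 1)
  rw [sum_range_succ'] at h
  simp only [Nat.choose_one_right, Nat.sub_zero, zero_add, pow_one, Nat.add_sub_add_right] at h
  push_cast at h
  linear_combination h

variable {K : Type*} [Field K] [CharZero K]

theorem choose_div_add_two (n k : ℕ) :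
    (n.choose k : K) / (k + 2) =
      ((n + 1).choose (k + 1) : K) / (n + 1) -
        ((n + 2).choose (k + 2) : K) / ((n + 1) * (n + 2)) := by
  have h₁ : ((n : K) + 1) * n.choose k = (n + 1).choose (k + 1) * (k + 1) := by
    exact_mod_cast Nat.add_one_mul_choose_eq n k
  have h₂ : ((n : K) + 2) * (n + 1).choose (k + 1) = (n + 2).choose (k + 2) * (k + 2) := by
    exact_mod_cast Nat.add_one_mul_choose_eq (n + 1) (k + 1)
  have : (k : K) + 2 ≠ 0 := by norm_cast
  have : (n : K) + 1 ≠ 0 := by norm_cast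
  have : (n : K) + 2 ≠ 0 := by norm_cast
  field_simp
  linear_combination ((n : K) + 2) * h₁ - h₂

theorem sum_range_choose_mul_pow_div_add_two (a b : K) (n : ℕ) :
    ∑ k ∈ range (n + 1), (n.choose k : K) * a ^ (k + 2) * b ^ (n - k) / (k + 2) =
      ((a + b) ^ (n + 2) - b ^ (n + 2)) / (n + 2) -
        b * ((a + b) ^ (n + 1) - b ^ (n + 1)) / (n + 1) := by
  have h : ∀ k ∈ range (n + 1), (n.choose k : K) * a ^ (k + 2) * b ^ (n - k) / (k + 2) =
      a / (n + 1) * (((n + 1).choose (k + 1) : K) * a ^ (k + 1) * b ^ (n - k)) -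
        1 / ((n + 1) * (n + 2)) * (((n + 2).choose (k + 2) : K) * a ^ (k + 2) * b ^ (n - k)) :=
    fun k _ ↦ by linear_combination a ^ (k + 2) * b ^ (n - k) * choose_div_add_two (K := K) n k
  rw [sum_congr rfl h, sum_sub_distrib, ← mul_sum, ← mul_sum, sum_range_choose_succ_mul_pow,
    sum_range_choose_add_two_mul_pow]
  have : (n : K) + 1 ≠ 0 := by norm_cast
  have : (n : K) + 2 ≠ 0 := by norm_cast
  field_simp
  ring

end BinomialSums

theorem goldenRatio_zpow_mul_goldenConj_zpow (m : ℤ) : φ ^ m * ψ ^ m = (-1) ^ m := by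
  rw [← mul_zpow, goldenRatio_mul_goldenConj]

theorem Int.coe_fib_sub_mul_neg_one_zpow (u v : ℤ) :
    (Int.fib (u - v) : ℝ) * (-1) ^ v = (φ ^ u * ψ ^ v - ψ ^ u * φ ^ v) / √5 := by
  have := zpow_ne_zero v goldenRatio_ne_zero
  have := zpow_ne_zero v goldenConj_ne_zero
  rw [coe_intFib_eq, ← goldenRatio_zpow_mul_goldenConj_zpow, zpow_sub₀ goldenRatio_ne_zero,
    zpow_sub₀ goldenConj_ne_zero]
  field_simp

theorem Int.coe_fib_mul_goldenRatio_zpow_add (x y : ℤ) :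
    (Int.fib x : ℝ) * φ ^ y + Int.fib y * ψ ^ x = Int.fib (x + y) := by
  rw [coe_intFib_eq, coe_intFib_eq, coe_intFib_eq, zpow_add₀ goldenRatio_ne_zero,
    zpow_add₀ goldenConj_ne_zero]
  field_simp
  ring

theorem Int.coe_fib_vajda (r s t : ℤ) :
    (Int.fib r * Int.fib (s + t) : ℝ) =
      Int.fib t * Int.fib (r + s) + (-1) ^ t * Int.fib (r - t) * Int.fib s := by
  have := zpow_ne_zero t goldenRatio_ne_zero
  have := zpow_ne_zero t goldenConj_ne_zero
  simp only [coe_intFib_eq, zpow_add₀ goldenRatio_ne_zero, zpow_add₀ goldenConj_ne_zero,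
    zpow_sub₀ goldenRatio_ne_zero, zpow_sub₀ goldenConj_ne_zero,
    ← goldenRatio_zpow_mul_goldenConj_zpow t]
  field_simp
  ring

theorem neg_one_zpow_mul_coe_fib (r s t : ℤ) (j m : ℕ) :
    (-1 : ℝ) ^ (r * m) * Int.fib (s * j - r * m + t) =
      (φ ^ t * (φ ^ s) ^ j * (ψ ^ r) ^ m - ψ ^ t * (ψ ^ s) ^ j * (φ ^ r) ^ m) / √5 := by
  rw [mul_comm, sub_add_eq_add_sub, Int.coe_fib_sub_mul_neg_one_zpow]
  simp only [zpow_add₀ goldenRatio_ne_zero, zpow_add₀ goldenConj_ne_zero, zpow_mul, zpow_natCast]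
  ring

theorem choose_mul_fib_div_add_two_eq_binet (r s t : ℤ) {n k : ℕ} (hk : k ≤ n) :
    (n.choose k : ℝ) * (-1) ^ (r * ((n : ℤ) - k)) * (Int.fib r : ℝ) ^ (k + 2) *
        (Int.fib s : ℝ) ^ (n - k) * Int.fib (s * (k + 2) - r * ((n : ℤ) - k) + t) / (k + 2) =
      (φ ^ t * ((n.choose k : ℝ) * (Int.fib r * φ ^ s) ^ (k + 2) *
            (Int.fib s * ψ ^ r) ^ (n - k) / (k + 2)) -
        ψ ^ t * ((n.choose k : ℝ) * (Int.fib r * ψ ^ s) ^ (k + 2) *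
            (Int.fib s * φ ^ r) ^ (n - k) / (k + 2))) / √5 := by
  have h := neg_one_zpow_mul_coe_fib r s t (k + 2) (n - k)
  push_cast [Nat.cast_sub hk] at h
  rw [mul_pow, mul_pow, mul_pow, mul_pow]
  linear_combination
    (n.choose k : ℝ) * (Int.fib r : ℝ) ^ (k + 2) * (Int.fib s : ℝ) ^ (n - k) / (k + 2) * h

theorem stmt_15 (r s t : ℤ) (n : ℕ) :
    ∑ k ∈ range (n + 1),
      (n.choose k : ℚ) * (-1) ^ (r * ((n : ℤ) - k)) * (fibZ r : ℚ) ^ (k + 2) *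
        (fibZ s : ℚ) ^ (n - k) * (fibZ (s * (k + 2) - r * ((n : ℤ) - k) + t) : ℚ) / (k + 2) =
    ((-1) ^ (t + 1) * (fibZ s : ℚ) ^ (n + 2) * (fibZ (r * (n + 2) - t) : ℚ) -
      (fibZ t : ℚ) * (fibZ (r + s) : ℚ) ^ (n + 2)) / ((n + 1) * (n + 2)) +
    (fibZ r : ℚ) * (fibZ (s + t) : ℚ) * (fibZ (r + s) : ℚ) ^ (n + 1) / (n + 1) := by
  simp only [fibZ_eq_intFib]
  rw [← @Rat.cast_inj ℝ]
  push_cast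
  rw [sum_congr rfl fun k hk ↦
      choose_mul_fib_div_add_two_eq_binet r s t (mem_range_succ_iff.mp hk),
    ← sum_div, sum_sub_distrib, ← mul_sum, ← mul_sum,
    sum_range_choose_mul_pow_div_add_two, sum_range_choose_mul_pow_div_add_two,
    Int.coe_fib_mul_goldenRatio_zpow_add, add_comm (Int.fib r * ψ ^ s : ℝ),
    Int.coe_fib_mul_goldenRatio_zpow_add, add_comm s r]
  have hR : (Int.fib (r * (n + 2) - t) : ℝ) =
      ((φ ^ r) ^ (n + 2) / φ ^ t - (ψ ^ r) ^ (n + 2) / ψ ^ t) / √5 := by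
    rw [coe_intFib_eq, zpow_sub₀ goldenRatio_ne_zero, zpow_sub₀ goldenConj_ne_zero, zpow_mul,
      zpow_mul]
    norm_cast
  -- with `(-1)^t = φ^t ψ^t`, what is left is a rational identity in `φ^r, ψ^r, φ^t, ψ^t`
  rw [Int.coe_fib_vajda, zpow_add_one₀ (neg_ne_zero.mpr one_ne_zero), hR, coe_intFib_eq t,
    coe_intFib_eq (r - t), zpow_sub₀ goldenRatio_ne_zero, zpow_sub₀ goldenConj_ne_zero,
    ← goldenRatio_zpow_mul_goldenConj_zpow t]
  have := zpow_ne_zero t goldenRatio_ne_zero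
  have := zpow_ne_zero t goldenConj_ne_zero
  have : (n : ℝ) + 1 ≠ 0 := by norm_cast
  have : (n : ℝ) + 2 ≠ 0 := by norm_cast
  field_simp
  ring
end
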